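/- Let p be a prime, k ≥ 1 with p^{a-1} ≤ k < p^a, and u', v' ∈ {0, p, 2p, …} with u' = u_1 p^{a-1} + ⋯ + u_{a-1} p and v' = v_1 p^{a-1} + ⋯ + v_{a-1} p, v' > u'. Then ∑_{u_a=0}^{p-1} ∑_{v_a=0}^{p-1} θ(u' + u_a, v' + v_a) = 0, where θ(u,v) is the weighted character term θ(u,v) = (v−u) e((κ_0(v_1−u_1)+⋯+κ_{a-1}(v_a−u_a))/p + ⋯ + κ_{a-1}(v_1−u_1)/p^a). -/

import Mathlib

open Complex in
/-- For `u, v < p^a` with base-`p` digit vectors `(u_1,…,u_a)`, `(v_1,…,v_a)`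
(most significant first, `u_i = u / p^(a-i) % p`) and `k` with base-`p` digits
`κ_0,…,κ_{a-1}` (`κ_j = k / p^j % p`), the weighted character term
`θ(u,v) = (v-u)·e((κ_0(v_1-u_1)+⋯+κ_{a-1}(v_a-u_a))/p + ⋯ + κ_{a-1}(v_1-u_1)/p^a)`. -/
noncomputable def thetaTerm (p a k u v : ℕ) : ℂ :=
  ((v : ℂ) - (u : ℂ)) *
    Complex.exp (2 * Real.pi * Complex.I *
      (∑ m ∈ Finset.Icc 1 a,
        (∑ i ∈ Finset.Icc 1 (a - m + 1),
            ((k / p ^ (m + i - 2) % p : ℕ) : ℝ) *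
              (((v / p ^ (a - i) % p : ℕ) : ℝ) - ((u / p ^ (a - i) % p : ℕ) : ℝ)))
          / (p : ℝ) ^ m))


open Finset

lemma digit_stable {p n w j : ℕ} (hp : 2 ≤ p) (hn : p ∣ n) (hw : w < p) (hj : 1 ≤ j) :
    (n + w) / p ^ j = n / p ^ j := by
  have hpj : 0 < p ^ j := Nat.pow_pos (by omega : 0 < p)
  have hple : p ≤ p ^ j := Nat.le_self_pow (by omega) p
  have hwlt : w < p ^ j := hw.trans_le hple
  have hdvd : p ∣ n % p ^ j := (Nat.dvd_mod_iff (dvd_pow_self p (by omega))).2 hn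
  have hkey : n % p ^ j + w < p ^ j := by
    obtain ⟨s, hs⟩ := hdvd
    have hlt : n % p ^ j < p ^ j := Nat.mod_lt _ hpj
    have hpj' : p ^ j = p * p ^ (j - 1) := by
      rw [← pow_succ']; congr 1; omega
    rw [hs, hpj'] at hlt ⊢
    have hslt : s < p ^ (j - 1) := lt_of_mul_lt_mul_left hlt (by omega)
    have : p * s + p ≤ p * p ^ (j - 1) := by
      calc p * s + p = p * (s + 1) := by ring
        _ ≤ p * p ^ (j - 1) := Nat.mul_le_mul_left p hslt
    omega
  rw [Nat.add_div hpj, Nat.div_eq_of_lt hwlt, Nat.mod_eq_of_lt hwlt, if_neg (by omega)]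
  omega

lemma exponent_shift (p a k u' v' ua va : ℕ) (hp : 2 ≤ p) (ha : 1 ≤ a)
    (hu'd : p ∣ u') (hv'd : p ∣ v') (hua : ua < p) (hva : va < p) :
    (∑ m ∈ Icc 1 a,
        (∑ i ∈ Icc 1 (a - m + 1),
            ((k / p ^ (m + i - 2) % p : ℕ) : ℝ) *
              ((((v' + va) / p ^ (a - i) % p : ℕ) : ℝ) - (((u' + ua) / p ^ (a - i) % p : ℕ) : ℝ)))
          / (p : ℝ) ^ m)
    = (∑ m ∈ Icc 1 a,
        (∑ i ∈ Icc 1 (a - m + 1),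
            ((k / p ^ (m + i - 2) % p : ℕ) : ℝ) *
              (((v' / p ^ (a - i) % p : ℕ) : ℝ) - ((u' / p ^ (a - i) % p : ℕ) : ℝ)))
          / (p : ℝ) ^ m)
      + ((k / p ^ (a - 1) % p : ℕ) : ℝ) * ((va : ℝ) - (ua : ℝ)) / p := by
  have hterm : ∀ m ∈ Icc 1 a,
      (∑ i ∈ Icc 1 (a - m + 1),
            ((k / p ^ (m + i - 2) % p : ℕ) : ℝ) *
              ((((v' + va) / p ^ (a - i) % p : ℕ) : ℝ) - (((u' + ua) / p ^ (a - i) % p : ℕ) : ℝ)))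
          / (p : ℝ) ^ m
      = (∑ i ∈ Icc 1 (a - m + 1),
            ((k / p ^ (m + i - 2) % p : ℕ) : ℝ) *
              (((v' / p ^ (a - i) % p : ℕ) : ℝ) - ((u' / p ^ (a - i) % p : ℕ) : ℝ)))
          / (p : ℝ) ^ m
        + (if m = 1 then ((k / p ^ (a - 1) % p : ℕ) : ℝ) * ((va : ℝ) - (ua : ℝ)) / p else 0) := by
    intro m hm
    simp only [mem_Icc] at hm
    by_cases h1 : m = 1
    · subst h1
      rw [if_pos rfl, Nat.sub_add_cancel ha]
      have hAB : ∑ i ∈ Icc 1 a,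
          (((k / p ^ (1 + i - 2) % p : ℕ) : ℝ) *
              ((((v' + va) / p ^ (a - i) % p : ℕ) : ℝ) - (((u' + ua) / p ^ (a - i) % p : ℕ) : ℝ))
            - ((k / p ^ (1 + i - 2) % p : ℕ) : ℝ) *
              (((v' / p ^ (a - i) % p : ℕ) : ℝ) - ((u' / p ^ (a - i) % p : ℕ) : ℝ)))
          = ((k / p ^ (a - 1) % p : ℕ) : ℝ) * ((va : ℝ) - (ua : ℝ)) := by
        rw [Finset.sum_eq_single_of_mem a (mem_Icc.2 ⟨ha, le_rfl⟩)]
        · have h2 : 1 + a - 2 = a - 1 := by omega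
          have h3 : a - a = 0 := by omega
          have hv0 : v' % p = 0 := Nat.eq_zero_of_dvd_of_lt ((Nat.dvd_mod_iff dvd_rfl).2 hv'd) (Nat.mod_lt _ (by omega))
          have hu0 : u' % p = 0 := Nat.eq_zero_of_dvd_of_lt ((Nat.dvd_mod_iff dvd_rfl).2 hu'd) (Nat.mod_lt _ (by omega))
          have h4v : (v' + va) % p = va := by
            rw [Nat.add_mod, hv0, zero_add, Nat.mod_mod_of_dvd, Nat.mod_eq_of_lt hva]
            exact dvd_rfl
          have h4u : (u' + ua) % p = ua := by
            rw [Nat.add_mod, hu0, zero_add, Nat.mod_mod_of_dvd, Nat.mod_eq_of_lt hua]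
            exact dvd_rfl
          rw [h2, h3, pow_zero, Nat.div_one, Nat.div_one, Nat.div_one, Nat.div_one,
            h4v, h4u, hv0, hu0]
          push_cast
          ring
        · intro i hi hne
          simp only [mem_Icc] at hi
          have hai : 1 ≤ a - i := by omega
          rw [digit_stable hp hu'd hua hai, digit_stable hp hv'd hva hai, sub_self]
      rw [Finset.sum_sub_distrib] at hAB
      have hABeq : (∑ i ∈ Icc 1 a,
          ((k / p ^ (1 + i - 2) % p : ℕ) : ℝ) *
              ((((v' + va) / p ^ (a - i) % p : ℕ) : ℝ) - (((u' + ua) / p ^ (a - i) % p : ℕ) : ℝ)))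
          = (∑ i ∈ Icc 1 a,
            ((k / p ^ (1 + i - 2) % p : ℕ) : ℝ) *
              (((v' / p ^ (a - i) % p : ℕ) : ℝ) - ((u' / p ^ (a - i) % p : ℕ) : ℝ)))
            + ((k / p ^ (a - 1) % p : ℕ) : ℝ) * ((va : ℝ) - (ua : ℝ)) := by linarith
      rw [hABeq, pow_one]; ring
    · rw [if_neg h1, add_zero]
      congr 1
      apply Finset.sum_congr rfl
      intro i hi
      simp only [mem_Icc] at hi
      have hai : 1 ≤ a - i := by omega
      rw [digit_stable hp hu'd hua hai, digit_stable hp hv'd hva hai]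
  rw [Finset.sum_congr rfl hterm, Finset.sum_add_distrib,
    Finset.sum_ite_eq' (Icc 1 a) 1, if_pos (mem_Icc.2 ⟨le_rfl, ha⟩)]

lemma root_sum {z : ℂ} {p : ℕ} (h1 : z ≠ 1) (hzp : z ^ p = 1) :
    ∑ t ∈ Finset.range p, z ^ t = 0 := by
  rw [geom_sum_eq h1, hzp, sub_self, zero_div]

theorem theta_block_sum_zero (p : ℕ) (hp : p.Prime) (a k : ℕ) (ha : 1 ≤ a)
    (hk1 : p ^ (a - 1) ≤ k) (hk2 : k < p ^ a)
    (u' v' : ℕ) (hu'd : p ∣ u') (hv'd : p ∣ v')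
    (hu' : u' < p ^ a) (hv' : v' < p ^ a) (huv : u' < v') :
    ∑ ua ∈ Finset.range p, ∑ va ∈ Finset.range p,
        thetaTerm p a k (u' + ua) (v' + va) = 0 := by
  have hpp : 2 ≤ p := hp.two_le
  set κ : ℕ := k / p ^ (a - 1) % p with hκdef
  have hκlt : κ < p := Nat.mod_lt _ (by omega)
  have hκpos : 1 ≤ κ := by
    have hdiv_lt : k / p ^ (a - 1) < p := by
      have hpa : p * p ^ (a - 1) = p ^ a := by
        rw [← pow_succ']; congr 1; omega
      rw [Nat.div_lt_iff_lt_mul (Nat.pow_pos (by omega : 0 < p)), hpa]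
      exact hk2
    have hdiv_pos : 1 ≤ k / p ^ (a - 1) := (Nat.one_le_div_iff (Nat.pow_pos (by omega : 0 < p))).2 hk1
    rw [hκdef, Nat.mod_eq_of_lt hdiv_lt]
    exact hdiv_pos
  -- the root of unity
  set s : ℂ := 2 * Real.pi * Complex.I * ((κ : ℂ) / (p : ℂ)) with hsdef
  set z : ℂ := Complex.exp s with hzdef
  have hpne : (p : ℂ) ≠ 0 := Nat.cast_ne_zero.2 (by omega)
  have hzp : z ^ p = 1 := by
    rw [hzdef, ← Complex.exp_nat_mul]
    have : (p : ℂ) * s = (κ : ℂ) * (2 * Real.pi * Complex.I) := by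
      rw [hsdef]; field_simp
    rw [this]
    exact_mod_cast Complex.exp_int_mul_two_pi_mul_I (κ : ℤ)
  have hz1 : z ≠ 1 := by
    intro h
    rw [hzdef, Complex.exp_eq_one_iff] at h
    obtain ⟨n, hn⟩ := h
    have h2πI : (2 * Real.pi * Complex.I : ℂ) ≠ 0 := by
      simp [Complex.I_ne_zero, Real.pi_ne_zero]
    have hfrac : ((κ : ℂ) / (p : ℂ)) = (n : ℂ) := by
      have : (2 * Real.pi * Complex.I : ℂ) * ((κ : ℂ) / (p : ℂ))
          = (2 * Real.pi * Complex.I : ℂ) * (n : ℂ) := by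
        rw [← hsdef, hn]; ring
      exact mul_left_cancel₀ h2πI this
    have hκeq : (κ : ℂ) = (n : ℂ) * (p : ℂ) := by
      field_simp at hfrac; linear_combination hfrac
    have hκz : (κ : ℤ) = n * (p : ℤ) := by exact_mod_cast hκeq
    have hpz : (2 : ℤ) ≤ (p : ℤ) := by exact_mod_cast hpp
    have hκz1 : (1 : ℤ) ≤ (κ : ℤ) := by exact_mod_cast hκpos
    have hκz2 : (κ : ℤ) < (p : ℤ) := by exact_mod_cast hκlt
    rcases le_or_gt n 0 with hn0 | hn0
    · nlinarith
    · have : (1 : ℤ) ≤ n := hn0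
      nlinarith
  have hw1 : z⁻¹ ≠ 1 := by
    intro h; exact hz1 (by rwa [inv_eq_one] at h)
  have hwp : (z⁻¹) ^ p = 1 := by rw [inv_pow, hzp, inv_one]
  have hZ : ∑ t ∈ Finset.range p, z ^ t = 0 := root_sum hz1 hzp
  have hW : ∑ t ∈ Finset.range p, (z⁻¹) ^ t = 0 := root_sum hw1 hwp
  -- base exponent
  set E0 : ℝ := ∑ m ∈ Finset.Icc 1 a,
        (∑ i ∈ Finset.Icc 1 (a - m + 1),
            ((k / p ^ (m + i - 2) % p : ℕ) : ℝ) *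
              (((v' / p ^ (a - i) % p : ℕ) : ℝ) - ((u' / p ^ (a - i) % p : ℕ) : ℝ)))
          / (p : ℝ) ^ m with hE0def
  set C : ℂ := (v' : ℂ) - (u' : ℂ) with hCdef
  set e0 : ℂ := Complex.exp (2 * Real.pi * Complex.I * (E0 : ℝ)) with he0def
  have hterm : ∀ ua ∈ Finset.range p, ∀ va ∈ Finset.range p,
      thetaTerm p a k (u' + ua) (v' + va)
        = e0 * ((C - (ua : ℂ) + (va : ℂ)) * z ^ va * (z⁻¹) ^ ua) := by
    intro ua hua va hva
    rw [Finset.mem_range] at hua hva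
    simp only [thetaTerm]
    rw [exponent_shift p a k u' v' ua va hpp ha hu'd hv'd hua hva]
    rw [← hκdef, ← hE0def]
    rw [Complex.ofReal_add, mul_add, Complex.exp_add]
    have hsplit : (2 * Real.pi * Complex.I : ℂ) *
        (((κ : ℝ) * ((va : ℝ) - (ua : ℝ)) / (p : ℝ) : ℝ) : ℂ)
        = (va : ℂ) * s + (ua : ℂ) * (-s) := by
      rw [hsdef]; push_cast; ring
    rw [hsplit, Complex.exp_add, Complex.exp_nat_mul, Complex.exp_nat_mul, Complex.exp_neg]
    rw [← hzdef, ← he0def, hCdef]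
    push_cast
    ring
  rw [Finset.sum_congr rfl (fun ua hua => Finset.sum_congr rfl (hterm ua hua))]
  -- now pure algebra with roots of unity
  have hinner : ∀ ua : ℕ,
      ∑ va ∈ Finset.range p, e0 * ((C - (ua : ℂ) + (va : ℂ)) * z ^ va * (z⁻¹) ^ ua)
        = e0 * ((z⁻¹) ^ ua * ∑ t ∈ Finset.range p, (t : ℂ) * z ^ t) := by
    intro ua
    rw [← Finset.mul_sum]
    congr 1
    calc ∑ va ∈ Finset.range p, (C - (ua : ℂ) + (va : ℂ)) * z ^ va * (z⁻¹) ^ ua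
        = ∑ va ∈ Finset.range p,
            ((z⁻¹) ^ ua * (C - (ua : ℂ)) * z ^ va + (z⁻¹) ^ ua * ((va : ℂ) * z ^ va)) := by
          apply Finset.sum_congr rfl; intro va _; ring
      _ = (z⁻¹) ^ ua * (C - (ua : ℂ)) * (∑ va ∈ Finset.range p, z ^ va)
            + (z⁻¹) ^ ua * ∑ va ∈ Finset.range p, (va : ℂ) * z ^ va := by
          rw [Finset.sum_add_distrib, ← Finset.mul_sum, ← Finset.mul_sum]
      _ = (z⁻¹) ^ ua * ∑ t ∈ Finset.range p, (t : ℂ) * z ^ t := by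
          rw [hZ, mul_zero, zero_add]
  rw [Finset.sum_congr rfl (fun ua _ => hinner ua)]
  calc ∑ ua ∈ Finset.range p, e0 * ((z⁻¹) ^ ua * ∑ t ∈ Finset.range p, (t : ℂ) * z ^ t)
      = (e0 * ∑ t ∈ Finset.range p, (t : ℂ) * z ^ t) * ∑ ua ∈ Finset.range p, (z⁻¹) ^ ua := by
        rw [Finset.mul_sum]
        apply Finset.sum_congr rfl
        intro ua _
        ring
    _ = 0 := by rw [hW, mul_zero]
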